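/- For all integers 0 ≤ k ≤ n there exists a collection of [n choose k]₂ mutually orthogonal permutations of Gr₂(n,k) such that, for each 0 ≤ m ≤ k, exactly 2^{(k−m)²} · [n−k choose k−m]₂ · [k choose m]₂ of them have the m-intersection property. -/

import Mathlib

/-
For each `m` the relation `dim (W ⊓ U) = m` on `Gr₂(n,k)` is regular of the same degree
`d m = 2^{(k-m)²} [n-k choose k-m]₂ [k choose m]₂` in both arguments. To count the `U` with
`dim U = k` and `U ⊓ W = X` for a fixed `X ≤ W`, pass to `V ⧸ X`: there `U ⧸ X` is a
`(k-m)`-subspace disjoint from `W ⧸ X`, and such subspaces are the graphs of linear maps from a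
`(k-m)`-subspace of a complement of `W ⧸ X` to `W ⧸ X`.
By Hall's theorem a `d`-regular relation on a finite set contains a permutation; removing it
leaves a `(d-1)`-regular relation, so the relation is the disjoint union of `d` permutations.
Doing this for every `m` yields `∑ m, d m = |Gr₂(n,k)|` mutually orthogonal permutations,
exactly `d m` of which have the `m`-intersection property.
-/

/-- The Gaussian binomial coefficient `[n choose k]₂`, as a natural number:
`∏_{i=0}^{k-1}(2^{n-i}-1) / ∏_{i=0}^{k-1}(2^{k-i}-1)` (the division is exact). -/
def gbinomN (n k : ℕ) : ℕ :=
  (∏ i ∈ Finset.range k, (2 ^ (n - i) - 1)) / (∏ i ∈ Finset.range k, (2 ^ (k - i) - 1))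

/-- The Grassmannian `Gr₂(n,k)`: the set of `k`-dimensional subspaces of `𝔽₂ⁿ`. -/
abbrev Grassmannian (n k : ℕ) :=
  {W : Submodule (ZMod 2) (Fin n → ZMod 2) // Module.finrank (ZMod 2) W = k}

/-- A permutation of `Gr₂(n,k)` has the `m`-intersection property if
`dim(W ∩ π(W)) = m` for every `W`. -/
def HasIntersectionProperty {n k : ℕ} (π : Equiv.Perm (Grassmannian n k)) (m : ℕ) : Prop :=
  ∀ W : Grassmannian n k,
    Module.finrank (ZMod 2) ↥((W : Submodule (ZMod 2) (Fin n → ZMod 2)) ⊓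
      ((π W : Grassmannian n k) : Submodule (ZMod 2) (Fin n → ZMod 2))) = m

section OrthogonalPermutations

open Finset

variable {S : Type*} [Finite S]

theorem exists_perm_forall_rel_of_regular {R : S → S → Prop} {d : ℕ} (hd : 0 < d)
    (hrow : ∀ a, Nat.card {b // R a b} = d) (hcol : ∀ b, Nat.card {a // R a b} = d) :
    ∃ σ : Equiv.Perm S, ∀ a, R a (σ a) := by
  classical
  cases nonempty_fintype S
  simp only [Nat.card_eq_fintype_card, Fintype.card_subtype] at hrow hcol
  -- Hall's condition, by double counting the edges between `A` and its neighbourhood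
  have hall : ∀ A : Finset S, #A ≤ #{b | ∃ a ∈ A, R a b} := fun A => by
    refine Nat.le_of_mul_le_mul_right (card_mul_le_card_mul R (m := d) (n := d) ?_ ?_) hd
    · intro a ha
      refine (hrow a).symm.le.trans (card_le_card fun b hb => ?_)
      simp only [mem_filter, mem_univ, true_and, mem_bipartiteAbove] at hb ⊢
      exact ⟨⟨a, ha, hb⟩, hb⟩
    · intro b _
      exact (card_le_card (filter_subset_filter _ (subset_univ A))).trans (hcol b).le
  obtain ⟨f, hf, hR⟩ := (Fintype.all_card_le_filter_rel_iff_exists_injective R).mp hall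
  exact ⟨Equiv.ofBijective f (Finite.injective_iff_bijective.mp hf), hR⟩

theorem Nat.card_subtype_and_ne_add_one {P : S → Prop} {x : S} (hx : P x) :
    Nat.card {b // P b ∧ b ≠ x} + 1 = Nat.card {b // P b} :=
  Set.ncard_sdiff_singleton_add_one (s := {b | P b}) hx

theorem exists_orthogonal_perms_of_regular (R : S → S → Prop) (d : ℕ)
    (hrow : ∀ a, Nat.card {b // R a b} = d) (hcol : ∀ b, Nat.card {a // R a b} = d) :
    ∃ π : Fin d → Equiv.Perm S,
      (∀ i a, R a (π i a)) ∧ Pairwise fun i j => ∀ a, π i a ≠ π j a := by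
  induction d generalizing R with
  | zero => exact ⟨Fin.elim0, fun i => i.elim0, fun i => i.elim0⟩
  | succ d ih =>
    obtain ⟨σ, hσ⟩ := exists_perm_forall_rel_of_regular d.succ_pos hrow hcol
    have hrow' (a : S) : Nat.card {b // R a b ∧ b ≠ σ a} = d := by
      have := Nat.card_subtype_and_ne_add_one (hσ a)
      have := hrow a
      omega
    have hcol' (b : S) : Nat.card {a // R a b ∧ b ≠ σ a} = d := by
      have := Nat.card_subtype_and_ne_add_one (P := (R · b)) (by simpa using hσ (σ.symm b))
      have := hcol b
      have hne (a : S) : R a b ∧ b ≠ σ a ↔ R a b ∧ a ≠ σ.symm b := by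
        rw [ne_eq, ne_eq, σ.eq_symm_apply, eq_comm]
      rw [Nat.card_congr (Equiv.subtypeEquivRight hne)]
      omega
    obtain ⟨π, hπR, hπ⟩ := ih _ hrow' hcol'
    refine ⟨Fin.cons σ π, Fin.cases hσ fun i a => (hπR i a).1, ?_⟩
    intro i j hij a
    cases i using Fin.cases <;> cases j using Fin.cases
    · exact absurd rfl hij
    · exact ((hπR _ a).2).symm
    · exact (hπR _ a).2
    · exact hπ (fun h => hij (congrArg Fin.succ h)) a

theorem exists_orthogonal_perms_of_regular_coloring [Nonempty S] {ι : Type*} (c : S → S → ι)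
    (d : ι → ℕ) (hrow : ∀ a i, Nat.card {b // c a b = i} = d i)
    (hcol : ∀ b i, Nat.card {a // c a b = i} = d i) :
    ∃ π : Fin (Nat.card S) → Equiv.Perm S, (Pairwise fun j j' => ∀ a, π j a ≠ π j' a) ∧
      ∀ i, Nat.card {j // ∀ a, c a (π j a) = i} = d i := by
  choose F hFc hF using fun i =>
    exists_orthogonal_perms_of_regular (fun a b => c a b = i) (d i) (hrow · i) (hcol · i)
  obtain ⟨a₀⟩ := ‹Nonempty S›
  let G : (Σ i, Fin (d i)) → Equiv.Perm S := fun p => F p.1 p.2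
  have hG : Pairwise fun p q => ∀ a, G p a ≠ G q a := by
    rintro ⟨i, j⟩ ⟨i', j'⟩ hne a
    by_cases hi : i = i'
    · subst hi
      exact hF i (fun h => hne (congrArg _ h)) a
    · exact fun h => hi ((hFc i j a).symm.trans (h ▸ hFc i' j' a))
  have hGc (p : Σ i, Fin (d i)) (i : ι) : (∀ a, c a (G p a) = i) ↔ p.1 = i :=
    ⟨fun h => (hFc p.1 p.2 a₀).symm.trans (h a₀), fun h a => h ▸ hFc p.1 p.2 a⟩
  -- the colour classes seen from `a₀` partition `S` into blocks of sizes `d i`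
  let e : Fin (Nat.card S) ≃ Σ i, Fin (d i) :=
    (Finite.equivFin S).symm.trans <| (Equiv.sigmaFiberEquiv (c a₀)).symm.trans <|
      Equiv.sigmaCongrRight fun i => Finite.equivFinOfCardEq (hrow a₀ i)
  refine ⟨fun j => G (e j), fun j j' h => hG (e.injective.ne h), fun i => ?_⟩
  rw [Nat.card_congr (e.subtypeEquiv (q := fun p => p.1 = i) fun j => hGc (e j) i),
    Nat.card_congr (Equiv.sigmaSubtype i), Nat.card_eq_fintype_card, Fintype.card_fin]

end OrthogonalPermutations

theorem Nat.card_sigma_of_card_eq {α : Type*} {β : α → Type*} [Finite α]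
    [∀ a, Finite (β a)] {c : ℕ} (h : ∀ a, Nat.card (β a) = c) :
    Nat.card (Sigma β) = Nat.card α * c := by
  have := Fintype.ofFinite α
  simp [Nat.card_sigma, h, mul_comm]

section SubspaceCount

open Module Submodule

variable {K V : Type*} [Field K] [AddCommGroup V] [Module K V]

theorem exists_submodule_finrank_eq [FiniteDimensional K V] {k : ℕ} (hk : k ≤ finrank K V) :
    ∃ W : Submodule K V, finrank K W = k := by
  let b := (Module.finBasis K V).linearIndependent.comp _ (Fin.castLE_injective hk)
  exact ⟨span K (Set.range _), (finrank_span_eq_card b).trans (Fintype.card_fin k)⟩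

variable [Fintype K] [Finite V]

local notation "q" => Fintype.card K

theorem card_linearIndependent_span_eq {k : ℕ} (W : Submodule K V) (hW : finrank K W = k) :
    Nat.card {s : {s : Fin k → V // LinearIndependent K s} // span K (Set.range s.1) = W} =
      ∏ i : Fin k, (q ^ k - q ^ (i : ℕ)) := by
  subst hW
  have hspan (t : {t : Fin (finrank K W) → W // LinearIndependent K t}) :
      span K (Set.range (W.subtype ∘ t.1)) = W := by
    rw [Set.range_comp, ← map_span, t.2.span_eq_top_of_card_eq_finrank' (by simp),
      map_subtype_top]
  rw [← card_linearIndependent le_rfl]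
  exact Nat.card_congr
    { toFun s :=
        ⟨fun i => ⟨s.1.1 i, s.2.le (subset_span ⟨i, rfl⟩)⟩, .of_comp W.subtype s.1.2⟩
      invFun t := ⟨⟨W.subtype ∘ t.1, t.2.map' _ W.ker_subtype⟩, hspan t⟩
      left_inv _ := rfl
      right_inv _ := rfl }

theorem card_submodule_finrank_mul_prod (k : ℕ) :
    Nat.card {W : Submodule K V // finrank K W = k} * ∏ i : Fin k, (q ^ k - q ^ (i : ℕ)) =
      ∏ i : Fin k, (q ^ finrank K V - q ^ (i : ℕ)) := by
  by_cases hk : k ≤ finrank K V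
  · let Φ (s : {s : Fin k → V // LinearIndependent K s}) :
        {W : Submodule K V // finrank K W = k} :=
      ⟨span K (Set.range s.1), (finrank_span_eq_card s.2).trans (Fintype.card_fin k)⟩
    have hfiber (W : {W : Submodule K V // finrank K W = k}) :
        Nat.card {s // Φ s = W} = ∏ i : Fin k, (q ^ k - q ^ (i : ℕ)) := by
      rw [← card_linearIndependent_span_eq W.1 W.2]
      exact Nat.card_congr (Equiv.subtypeEquivRight fun s => Subtype.ext_iff)
    rw [← card_linearIndependent hk, ← Nat.card_congr (Equiv.sigmaFiberEquiv Φ),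
      Nat.card_sigma_of_card_eq hfiber]
  · have hempty : IsEmpty {W : Submodule K V // finrank K W = k} :=
      ⟨fun W => hk (W.2 ▸ W.1.finrank_le)⟩
    rw [Nat.card_of_isEmpty, zero_mul, eq_comm]
    exact Finset.prod_eq_zero (Finset.mem_univ ⟨finrank K V, not_le.mp hk⟩) (Nat.sub_self _)

end SubspaceCount

section Graph

open Module Submodule

variable {K E F : Type*} [Field K] [AddCommGroup E] [Module K E] [AddCommGroup F] [Module K F]

theorem Submodule.disjoint_snd_iff {U : Submodule K (E × F)} :
    Disjoint U (Submodule.snd K E F) ↔ ∀ x ∈ U, x.1 = 0 → x.2 = 0 := by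
  simp +contextual [disjoint_def, Submodule.snd, Prod.ext_iff]

theorem LinearPMap.graph_eq_range_prod (f : E →ₗ.[K] F) :
    f.graph = LinearMap.range (f.domain.subtype.prod f.toFun) := by
  ext x
  simp [LinearPMap.mem_graph_iff, Prod.ext_iff, eq_comm]

theorem LinearPMap.finrank_graph [FiniteDimensional K E] (f : E →ₗ.[K] F) :
    finrank K f.graph = finrank K f.domain := by
  rw [f.graph_eq_range_prod, LinearMap.finrank_range_of_inj]
  exact fun x y h => Subtype.ext (congrArg Prod.fst h)

theorem LinearPMap.disjoint_graph_snd (f : E →ₗ.[K] F) :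
    Disjoint f.graph (Submodule.snd K E F) :=
  Submodule.disjoint_snd_iff.mpr fun _ hx h0 => f.graph_fst_eq_zero_snd hx h0

variable [Fintype K]

local notation "q" => Fintype.card K

theorem Module.natCard_linearMap [FiniteDimensional K E] [FiniteDimensional K F] :
    Nat.card (E →ₗ[K] F) = q ^ (finrank K E * finrank K F) := by
  rw [Module.natCard_eq_pow_finrank (K := K), Module.finrank_linearMap, Nat.card_eq_fintype_card]

variable [Finite E] [Finite F]

theorem card_finrank_disjoint_snd_eq (r : ℕ) :
    Nat.card {U : Submodule K (E × F) // finrank K U = r ∧ Disjoint U (Submodule.snd K E F)} =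
      Nat.card {D : Submodule K E // finrank K D = r} * q ^ (r * finrank K F) := by
  let graphOf (p : Σ D : {D : Submodule K E // finrank K D = r}, D.1 →ₗ[K] F) :
      {U : Submodule K (E × F) // finrank K U = r ∧ Disjoint U (Submodule.snd K E F)} :=
    ⟨LinearPMap.graph ⟨p.1.1, p.2⟩, (LinearPMap.finrank_graph _).trans p.1.2,
      LinearPMap.disjoint_graph_snd _⟩
  have hinj : Function.Injective graphOf := by
    rintro ⟨⟨D, hD⟩, f⟩ ⟨⟨D', hD'⟩, f'⟩ h
    obtain ⟨rfl, hf⟩ := LinearPMap.mk.inj (LinearPMap.eq_of_eq_graph (congrArg Subtype.val h))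
    cases eq_of_heq hf
    rfl
  have hsurj : Function.Surjective graphOf := by
    rintro ⟨U, hUr, hU⟩
    have hg := Submodule.disjoint_snd_iff.mp hU
    refine ⟨⟨⟨U.toLinearPMap.domain, ?_⟩, U.toLinearPMap.toFun⟩,
      Subtype.ext (U.toLinearPMap_graph_eq hg)⟩
    rw [← LinearPMap.finrank_graph, U.toLinearPMap_graph_eq hg, hUr]
  have : ∀ D : Submodule K E, Finite (D →ₗ[K] F) := fun _ => Module.finite_of_finite K
  rw [← Nat.card_congr (Equiv.ofBijective _ ⟨hinj, hsurj⟩), Nat.card_sigma_of_card_eq]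
  intro D
  rw [Module.natCard_linearMap, D.2]

variable {V : Type*} [AddCommGroup V] [Module K V] [Finite V]

theorem card_finrank_disjoint_eq {C W : Submodule K V} (hCW : IsCompl C W) (r : ℕ) :
    Nat.card {U : Submodule K V // finrank K U = r ∧ Disjoint U W} =
      Nat.card {D : Submodule K C // finrank K D = r} * q ^ (r * finrank K W) := by
  let e := prodEquivOfIsCompl C W hCW
  have hsnd : (Submodule.snd K C W).map (e : C × W →ₗ[K] V) = W := by
    ext x
    rw [map_equiv_eq_comap_symm, mem_comap,
      ← prodEquivOfIsCompl_symm_apply_fst_eq_zero (h := hCW)]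
    simp [Submodule.snd, e]
  rw [← card_finrank_disjoint_snd_eq]
  refine Nat.card_congr ((orderIsoMapComap e).toEquiv.subtypeEquiv fun U => ?_).symm
  refine and_congr ?_ ?_
  · change _ ↔ finrank K (U.map (e : C × W →ₗ[K] V)) = r
    rw [e.finrank_map_eq]
  · rw [← disjoint_map_orderIso_iff (orderIsoMapComap e)]
    exact Iff.of_eq (congrArg _ hsnd)

end Graph

section Quotient

open Module Submodule

variable {K V : Type*} [Field K] [AddCommGroup V] [Module K V] {X : Submodule K V}

theorem Submodule.finrank_comap_mkQ [FiniteDimensional K V] (U : Submodule K (V ⧸ X)) :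
    finrank K (U.comap X.mkQ) = finrank K U + finrank K X := by
  have h := LinearMap.finrank_range_add_finrank_ker (X.mkQ ∘ₗ (U.comap X.mkQ).subtype)
  rw [LinearMap.range_comp, range_subtype, map_comap_eq_of_surjective X.mkQ_surjective,
    LinearMap.ker_comp, ker_mkQ, (comapSubtypeEquivOfLe (le_comap_mkQ X U)).finrank_eq] at h
  exact h.symm

theorem Submodule.comap_mkQ_inf_eq_iff_disjoint {W : Submodule K V} (hXW : X ≤ W)
    (U : Submodule K (V ⧸ X)) : U.comap X.mkQ ⊓ W = X ↔ Disjoint U (W.map X.mkQ) := by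
  rw [disjoint_iff, ← (comap_injective_of_surjective X.mkQ_surjective).eq_iff, comap_inf,
    comap_map_mkQ, sup_eq_right.mpr hXW, comap_bot, ker_mkQ]

theorem Submodule.comap_subtype_eq_iff {U W : Submodule K V} {X : Submodule K W} :
    U.comap W.subtype = X ↔ U ⊓ W = X.map W.subtype := by
  rw [← (map_injective_of_injective W.injective_subtype).eq_iff, map_comap_subtype, inf_comm]

theorem card_finrank_inf_eq_card_quotient [FiniteDimensional K V] {W X : Submodule K V}
    (hXW : X ≤ W) {k : ℕ} (hk : finrank K X ≤ k) :
    Nat.card {U : Submodule K V // finrank K U = k ∧ U ⊓ W = X} =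
      Nat.card {U : Submodule K (V ⧸ X) // finrank K U = k - finrank K X ∧
        Disjoint U (W.map X.mkQ)} := by
  let pull (U : {U : Submodule K (V ⧸ X) // finrank K U = k - finrank K X ∧
      Disjoint U (W.map X.mkQ)}) : {U : Submodule K V // finrank K U = k ∧ U ⊓ W = X} :=
    ⟨U.1.comap X.mkQ, by rw [finrank_comap_mkQ, U.2.1]; omega,
      (comap_mkQ_inf_eq_iff_disjoint hXW _).mpr U.2.2⟩
  refine (Nat.card_congr (Equiv.ofBijective pull ⟨fun U U' h => ?_, fun U => ?_⟩)).symm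
  · exact Subtype.ext (comap_injective_of_surjective X.mkQ_surjective (congrArg Subtype.val h))
  · have hXU : X ≤ U.1 := U.2.2.symm.le.trans inf_le_left
    have hcomap : (U.1.map X.mkQ).comap X.mkQ = U.1 := by
      rw [comap_map_mkQ, sup_eq_right.mpr hXU]
    have hrank := finrank_comap_mkQ (U.1.map X.mkQ)
    rw [hcomap, U.2.1] at hrank
    refine ⟨⟨U.1.map X.mkQ, by omega, ?_⟩, Subtype.ext hcomap⟩
    rw [← comap_mkQ_inf_eq_iff_disjoint hXW, hcomap, U.2.2]

end Quotient

theorem Nat.pow_sub_pow_eq_pow_mul {q : ℕ} (hq : 1 ≤ q) (a i : ℕ) :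
    q ^ a - q ^ i = q ^ i * (q ^ (a - i) - 1) := by
  rcases le_total i a with hi | hi
  · rw [Nat.mul_sub, ← pow_add, Nat.add_sub_cancel' hi, mul_one]
  · rw [Nat.sub_eq_zero_of_le hi, pow_zero, Nat.sub_self, mul_zero,
      Nat.sub_eq_zero_of_le (Nat.pow_le_pow_right hq hi)]

section Binary

open Module Submodule

variable {V : Type*} [AddCommGroup V] [Module (ZMod 2) V] [Finite V]

theorem card_submodule_finrank_eq_gbinomN (k : ℕ) :
    Nat.card {W : Submodule (ZMod 2) V // finrank (ZMod 2) W = k} =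
      gbinomN (finrank (ZMod 2) V) k := by
  have h := card_submodule_finrank_mul_prod (K := ZMod 2) (V := V) k
  simp only [ZMod.card, Nat.pow_sub_pow_eq_pow_mul one_le_two, Finset.prod_mul_distrib,
    mul_left_comm _ (Finset.prod _ _),
    Nat.mul_left_cancel_iff (Finset.prod_pos fun _ _ => Nat.two_pow_pos _)] at h
  rw [Fin.prod_univ_eq_prod_range (fun i => 2 ^ (k - i) - 1),
    Fin.prod_univ_eq_prod_range (fun i => 2 ^ (finrank (ZMod 2) V - i) - 1)] at h
  have hpos : 0 < ∏ i ∈ Finset.range k, (2 ^ (k - i) - 1) :=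
    Finset.prod_pos fun i hi => Nat.sub_pos_of_lt
      (Nat.one_lt_two_pow (Nat.sub_ne_zero_of_lt (Finset.mem_range.mp hi)))
  rw [gbinomN, ← h, Nat.mul_div_cancel _ hpos]

theorem card_finrank_disjoint_eq_gbinomN (W : Submodule (ZMod 2) V) (r : ℕ) :
    Nat.card {U : Submodule (ZMod 2) V // finrank (ZMod 2) U = r ∧ Disjoint U W} =
      gbinomN (finrank (ZMod 2) V - finrank (ZMod 2) W) r * 2 ^ (r * finrank (ZMod 2) W) := by
  obtain ⟨C, hC⟩ := W.exists_isCompl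
  have hCrank := Submodule.finrank_add_eq_of_isCompl hC
  rw [card_finrank_disjoint_eq hC.symm, card_submodule_finrank_eq_gbinomN, ZMod.card,
    show finrank (ZMod 2) C = finrank (ZMod 2) V - finrank (ZMod 2) W by omega]

theorem card_finrank_inf_eq_gbinomN {W X : Submodule (ZMod 2) V} (hXW : X ≤ W) :
    Nat.card {U : Submodule (ZMod 2) V // finrank (ZMod 2) U = finrank (ZMod 2) W ∧ U ⊓ W = X} =
      2 ^ ((finrank (ZMod 2) W - finrank (ZMod 2) X) ^ 2) *
        gbinomN (finrank (ZMod 2) V - finrank (ZMod 2) W)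
          (finrank (ZMod 2) W - finrank (ZMod 2) X) := by
  have hquot := X.finrank_quotient_add_finrank
  have hmap := finrank_comap_mkQ (W.map X.mkQ)
  rw [comap_map_mkQ, sup_eq_right.mpr hXW] at hmap
  have := finrank_mono hXW
  have := W.finrank_le
  have : Finite (V ⧸ X) := Module.finite_of_finite (ZMod 2)
  rw [card_finrank_inf_eq_card_quotient hXW (finrank_mono hXW), card_finrank_disjoint_eq_gbinomN,
    show finrank (ZMod 2) (V ⧸ X) - finrank (ZMod 2) (W.map X.mkQ) =
      finrank (ZMod 2) V - finrank (ZMod 2) W by omega,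
    show finrank (ZMod 2) (W.map X.mkQ) = finrank (ZMod 2) W - finrank (ZMod 2) X by omega,
    mul_comm, sq]

theorem card_finrank_inf_finrank_eq_gbinomN (W : Submodule (ZMod 2) V) (m : ℕ) :
    Nat.card {U : Submodule (ZMod 2) V //
        finrank (ZMod 2) U = finrank (ZMod 2) W ∧ finrank (ZMod 2) ↥(U ⊓ W) = m} =
      2 ^ ((finrank (ZMod 2) W - m) ^ 2) *
        gbinomN (finrank (ZMod 2) V - finrank (ZMod 2) W) (finrank (ZMod 2) W - m) *
        gbinomN (finrank (ZMod 2) W) m := by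
  let Φ (U : {U : Submodule (ZMod 2) V //
      finrank (ZMod 2) U = finrank (ZMod 2) W ∧ finrank (ZMod 2) ↥(U ⊓ W) = m}) :
      {X : Submodule (ZMod 2) W // finrank (ZMod 2) X = m} :=
    ⟨U.1.comap W.subtype, by
      rw [← finrank_map_subtype_eq, map_comap_subtype, inf_comm, U.2.2]⟩
  have hfiber (X : {X : Submodule (ZMod 2) W // finrank (ZMod 2) X = m}) :
      Nat.card {U // Φ U = X} = 2 ^ ((finrank (ZMod 2) W - m) ^ 2) *
        gbinomN (finrank (ZMod 2) V - finrank (ZMod 2) W) (finrank (ZMod 2) W - m) := by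
    conv_rhs => rw [← X.2, ← finrank_map_subtype_eq W X.1]
    rw [← card_finrank_inf_eq_gbinomN (map_subtype_le W X.1)]
    exact Nat.card_congr
      { toFun U := ⟨U.1.1, U.1.2.1, comap_subtype_eq_iff.mp (congrArg Subtype.val U.2)⟩
        invFun U := ⟨⟨U.1, U.2.1, by rw [U.2.2, finrank_map_subtype_eq, X.2]⟩,
          Subtype.ext (comap_subtype_eq_iff.mpr U.2.2)⟩
        left_inv _ := rfl
        right_inv _ := rfl }
  rw [← Nat.card_congr (Equiv.sigmaFiberEquiv Φ), Nat.card_sigma_of_card_eq hfiber,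
    card_submodule_finrank_eq_gbinomN, mul_comm]

end Binary

theorem nonempty_grassmannian {n k : ℕ} (hkn : k ≤ n) : Nonempty (Grassmannian n k) :=
  let ⟨W, hW⟩ := exists_submodule_finrank_eq (K := ZMod 2) (V := Fin n → ZMod 2)
    (hkn.trans_eq (Module.finrank_fin_fun _).symm)
  ⟨⟨W, hW⟩⟩

theorem card_grassmannian (n k : ℕ) : Nat.card (Grassmannian n k) = gbinomN n k :=
  (card_submodule_finrank_eq_gbinomN k).trans (by rw [Module.finrank_fin_fun])

theorem card_grassmannian_inf_finrank_eq {n k : ℕ} (W : Grassmannian n k) (m : ℕ) :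
    Nat.card {U : Grassmannian n k // Module.finrank (ZMod 2) ↥(U.1 ⊓ W.1) = m} =
      2 ^ ((k - m) ^ 2) * gbinomN (n - k) (k - m) * gbinomN k m := by
  rw [Nat.card_congr (Equiv.subtypeSubtypeEquivSubtypeInter
    (fun U : Submodule (ZMod 2) (Fin n → ZMod 2) => Module.finrank (ZMod 2) U = k)
    fun U => Module.finrank (ZMod 2) ↥(U ⊓ W.1) = m)]
  simpa only [W.2, Module.finrank_fin_fun] using card_finrank_inf_finrank_eq_gbinomN W.1 m

theorem exists_full_family_of_mutually_orthogonal_permutations {n k : ℕ} (hkn : k ≤ n) :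
    ∃ π : Fin (gbinomN n k) → Equiv.Perm (Grassmannian n k),
      (∀ i j, i ≠ j → ∀ W, π i W ≠ π j W) ∧
      (∀ m ≤ k, Nat.card {i : Fin (gbinomN n k) // HasIntersectionProperty (π i) m} =
        2 ^ ((k - m) ^ 2) * gbinomN (n - k) (k - m) * gbinomN k m) := by
  have := nonempty_grassmannian hkn
  obtain ⟨π, horth, hπ⟩ := exists_orthogonal_perms_of_regular_coloring
    (fun W U : Grassmannian n k => Module.finrank (ZMod 2) ↥(W.1 ⊓ U.1)) _
    (fun W m => (Nat.card_congr (Equiv.subtypeEquivRight fun U => by rw [inf_comm])).trans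
      (card_grassmannian_inf_finrank_eq W m))
    card_grassmannian_inf_finrank_eq
  rw [← card_grassmannian]
  exact ⟨π, fun i j hij => horth hij, fun m _ => hπ m⟩
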